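/- arXiv:2405.20016 — 5 statements merged into one kernel-verified Lean document; each statement's English description precedes it below -/
import Mathlib

section
/- Let t ≥ 2. For every c > 1/(t(t-1)), the equation c = ln(1-β) / (t((1-β)^(t-1) - 1)) has a unique solution β in the open interval (0,1). -/
lemma aux1 (s : ℕ) (hs : 1 ≤ s) (x : ℝ) (hx0 : 0 < x) (hx1 : x < 1) :
    x ^ s - 1 < s * x ^ s * Real.log x := by
  have hp : 0 < x ^ s := pow_pos hx0 s
  have hp1 : x ^ s < 1 := pow_lt_one₀ hx0.le hx1 (by omega)
  have h2 : Real.log (x ^ s)⁻¹ < (x ^ s)⁻¹ - 1 := by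
    apply Real.log_lt_sub_one_of_pos (by positivity)
    have : 1 < (x ^ s)⁻¹ := (one_lt_inv₀ hp).mpr hp1
    linarith
  rw [Real.log_inv, Real.log_pow] at h2
  have h3 := mul_lt_mul_of_pos_left h2 hp
  have h4 : x ^ s * (x ^ s)⁻¹ = 1 := mul_inv_cancel₀ hp.ne'
  nlinarith [h3, h4]

lemma aux2 (s : ℕ) (x : ℝ) (hx0 : 0 ≤ x) (hx1 : x ≤ 1) :
    s * x ^ s * (1 - x) ≤ x * (1 - x ^ s) := by
  induction s with
  | zero => simp
  | succ n ih =>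
    have h1 : x ^ (n + 1) = x ^ n * x := pow_succ _ _
    have h2 : x ^ n ≤ 1 := pow_le_one₀ hx0 hx1
    have h3 : 0 ≤ x ^ n := pow_nonneg hx0 n
    push_cast
    rw [h1]
    nlinarith [mul_le_mul_of_nonneg_right ih hx0,
      mul_nonneg (mul_nonneg hx0 (sub_nonneg.mpr hx1)) (sub_nonneg.mpr h2)]

set_option maxHeartbeats 1000000 in
theorem stmt_0 (t : ℕ) (ht : 2 ≤ t) (c : ℝ)
    (hc : c > 1 / ((t : ℝ) * ((t : ℝ) - 1))) :
    ∃! β : ℝ, β ∈ Set.Ioo (0 : ℝ) 1 ∧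
      c = Real.log (1 - β) / ((t : ℝ) * ((1 - β) ^ (t - 1) - 1)) := by
  obtain ⟨m, rfl⟩ : ∃ m, t = m + 2 := ⟨t - 2, by omega⟩
  clear ht
  have hsub1 : m + 2 - 1 = m + 1 := rfl
  rw [hsub1] at *
  set T : ℝ := ((m : ℝ) + 2) with hT
  have hTcast : ((m + 2 : ℕ) : ℝ) = T := by push_cast [hT]; ring
  rw [hTcast] at hc ⊢
  have hTpos : (0 : ℝ) < T := by positivity
  have hM1pos : (0 : ℝ) < (m : ℝ) + 1 := by positivity
  have hTm1 : T - 1 = (m : ℝ) + 1 := by rw [hT]; ring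
  rw [hTm1] at hc
  have hc0 : 0 < c := lt_trans (by positivity) hc
  -- the function
  set F : ℝ → ℝ := fun β => Real.log (1 - β) / (T * ((1 - β) ^ (m + 1) - 1)) with hF
  -- derivative facts
  have hderiv : ∀ β ∈ Set.Ioo (0 : ℝ) 1, HasDerivAt F
      (((1 - β)⁻¹ * (-1) * (T * ((1 - β) ^ (m + 1) - 1)) -
        Real.log (1 - β) * (T * (((m : ℝ) + 1) * (1 - β) ^ m * (-1)))) /
        (T * ((1 - β) ^ (m + 1) - 1)) ^ 2) β := by
    intro β hβ
    obtain ⟨hβ0, hβ1⟩ := hβ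
    have hx0 : 0 < 1 - β := by linarith
    have hx1 : 1 - β < 1 := by linarith
    have hplt : (1 - β) ^ (m + 1) < 1 := pow_lt_one₀ hx0.le hx1 (by omega)
    have hdne : T * ((1 - β) ^ (m + 1) - 1) ≠ 0 := by
      apply ne_of_lt
      apply mul_neg_of_pos_of_neg hTpos
      linarith
    have h1 : HasDerivAt (fun β : ℝ => 1 - β) (-1) β := by
      simpa using (hasDerivAt_id β).const_sub 1
    have h2 : HasDerivAt (fun β : ℝ => Real.log (1 - β)) ((1 - β)⁻¹ * (-1)) β :=
      (Real.hasDerivAt_log hx0.ne').comp β h1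
    have h3 : HasDerivAt (fun β : ℝ => (1 - β) ^ (m + 1))
        (((m : ℝ) + 1) * (1 - β) ^ m * (-1)) β := by
      have := (hasDerivAt_pow (m + 1) (1 - β)).comp β h1
      simpa [Function.comp_def] using this
    have h4 : HasDerivAt (fun β : ℝ => T * ((1 - β) ^ (m + 1) - 1))
        (T * (((m : ℝ) + 1) * (1 - β) ^ m * (-1))) β := by
      simpa using ((h3.sub_const 1).const_mul T)
    exact h2.div h4 hdne
  have hpos : ∀ β ∈ Set.Ioo (0 : ℝ) 1,
      0 < (((1 - β)⁻¹ * (-1) * (T * ((1 - β) ^ (m + 1) - 1)) -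
        Real.log (1 - β) * (T * (((m : ℝ) + 1) * (1 - β) ^ m * (-1)))) /
        (T * ((1 - β) ^ (m + 1) - 1)) ^ 2) := by
    intro β hβ
    obtain ⟨hβ0, hβ1⟩ := hβ
    have hx0 : 0 < 1 - β := by linarith
    have hx1 : 1 - β < 1 := by linarith
    have hplt : (1 - β) ^ (m + 1) < 1 := pow_lt_one₀ hx0.le hx1 (by omega)
    have hdne : T * ((1 - β) ^ (m + 1) - 1) ≠ 0 := by
      apply ne_of_lt
      apply mul_neg_of_pos_of_neg hTpos
      linarith
    apply div_pos _ (by positivity)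
    have hkey := aux1 (m + 1) (by omega) (1 - β) hx0 hx1
    push_cast at hkey
    have hNx : ((1 - β)⁻¹ * (-1) * (T * ((1 - β) ^ (m + 1) - 1)) -
        Real.log (1 - β) * (T * (((m : ℝ) + 1) * (1 - β) ^ m * (-1)))) * (1 - β) =
        T * (((m : ℝ) + 1) * (1 - β) ^ (m + 1) * Real.log (1 - β) -
          ((1 - β) ^ (m + 1) - 1)) := by
      field_simp
      ring
    have hNpos : 0 < ((1 - β)⁻¹ * (-1) * (T * ((1 - β) ^ (m + 1) - 1)) -
        Real.log (1 - β) * (T * (((m : ℝ) + 1) * (1 - β) ^ m * (-1)))) * (1 - β) := by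
      rw [hNx]
      nlinarith [hkey, hTpos]
    nlinarith [hNpos, hx0]
  -- continuity and monotonicity
  have hcont : ContinuousOn F (Set.Ioo (0 : ℝ) 1) := fun β hβ =>
    ((hderiv β hβ).continuousAt).continuousWithinAt
  have hmono : StrictMonoOn F (Set.Ioo (0 : ℝ) 1) := by
    apply strictMonoOn_of_deriv_pos (convex_Ioo 0 1) hcont
    intro β hβ
    rw [interior_Ioo] at hβ
    rw [(hderiv β hβ).deriv]
    exact hpos β hβ
  -- the upper point β₁
  set x₁ : ℝ := Real.exp (-(T * c + 1)) with hx₁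
  have hx₁0 : 0 < x₁ := Real.exp_pos _
  have hx₁1 : x₁ < 1 := by
    rw [hx₁, Real.exp_lt_one_iff]
    nlinarith
  have hlogx₁ : Real.log x₁ = -(T * c + 1) := by rw [hx₁, Real.log_exp]
  clear_value x₁
  set β₁ : ℝ := 1 - x₁ with hβ₁
  have hβ₁mem : β₁ ∈ Set.Ioo (0 : ℝ) 1 := ⟨by simp [hβ₁]; linarith, by simp [hβ₁]; linarith⟩
  have hFβ₁ : c < F β₁ := by
    have h1mb : 1 - β₁ = x₁ := by rw [hβ₁]; ring
    have hp0 : 0 < x₁ ^ (m + 1) := pow_pos hx₁0 _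
    have hp1 : x₁ ^ (m + 1) < 1 := pow_lt_one₀ hx₁0.le hx₁1 (by omega)
    have hlog := hlogx₁
    have hFval : F β₁ = (T * c + 1) / (T * (1 - x₁ ^ (m + 1))) := by
      rw [hF]
      simp only [h1mb, hlog]
      rw [div_eq_div_iff (by nlinarith) (by nlinarith)]
      ring
    rw [hFval]
    rw [lt_div_iff₀ (by nlinarith)]
    nlinarith [mul_nonneg hc0.le (mul_nonneg hTpos.le hp0.le)]
  -- the lower point β₀
  set a : ℝ := 1 / (T * ((m : ℝ) + 1) * c) with ha
  have ha0 : 0 < a := by positivity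
  have hc1 : 1 < c * (T * ((m : ℝ) + 1)) := by
    rw [gt_iff_lt, div_lt_iff₀ (by positivity)] at hc
    linarith
  have ha1 : a < 1 := by
    rw [ha, div_lt_one (by positivity)]
    nlinarith
  set x₀ : ℝ := a ^ ((1 : ℝ) / ((m : ℝ) + 1)) with hx₀def
  have hx₀0 : 0 < x₀ := Real.rpow_pos_of_pos ha0 _
  have hx₀1 : x₀ < 1 := Real.rpow_lt_one ha0.le ha1 (by positivity)
  have hx₀pow : x₀ ^ (m + 1) = a := by
    rw [hx₀def, ← Real.rpow_natCast (a ^ ((1 : ℝ) / ((m : ℝ) + 1))) (m + 1),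
      ← Real.rpow_mul ha0.le]
    push_cast
    rw [one_div_mul_cancel (by positivity : ((m : ℝ) + 1) ≠ 0), Real.rpow_one]
  clear_value x₀
  set β₀ : ℝ := 1 - x₀ with hβ₀
  have hβ₀mem : β₀ ∈ Set.Ioo (0 : ℝ) 1 := ⟨by rw [hβ₀]; linarith, by rw [hβ₀]; linarith⟩
  have hFβ₀ : F β₀ < c := by
    have h1mb : 1 - β₀ = x₀ := by rw [hβ₀]; ring
    have hFval : F β₀ = Real.log x₀ / (T * (a - 1)) := by
      rw [hF]
      simp only [h1mb, hx₀pow]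
    have hneg : T * (a - 1) < 0 := mul_neg_of_pos_of_neg hTpos (by linarith)
    rw [hFval, div_lt_iff_of_neg hneg]
    -- log bound
    have hl1 : Real.log x₀⁻¹ < x₀⁻¹ - 1 := by
      apply Real.log_lt_sub_one_of_pos (inv_pos.mpr hx₀0)
      have := (one_lt_inv₀ hx₀0).mpr hx₀1
      linarith
    rw [Real.log_inv] at hl1
    have hlog2 : x₀ * -Real.log x₀ < 1 - x₀ := by
      have hl2 := mul_lt_mul_of_pos_left hl1 hx₀0
      rwa [mul_sub, mul_inv_cancel₀ hx₀0.ne', mul_one] at hl2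
    -- geometric bound
    have hgeq := aux2 (m + 1) x₀ hx₀0.le hx₀1.le
    push_cast at hgeq
    rw [hx₀pow] at hgeq
    have h6 := mul_le_mul_of_nonneg_left hgeq (le_of_lt (mul_pos hTpos hc0))
    have h7 : T * c * (((m : ℝ) + 1) * a * (1 - x₀)) = 1 - x₀ := by
      rw [ha]
      field_simp
    have h8 : 1 - x₀ ≤ T * c * (x₀ * (1 - a)) := by rw [← h7]; exact h6
    nlinarith [hlog2, h8, hx₀0]
  -- β₀ < β₁
  have hlt : β₀ < β₁ := by
    by_contra h
    push_neg at h
    rcases eq_or_lt_of_le h with he | hlt'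
    · rw [he] at hFβ₁; linarith
    · have := hmono hβ₁mem hβ₀mem hlt'
      linarith
  -- intermediate value theorem
  have hsubI : Set.Icc β₀ β₁ ⊆ Set.Ioo (0 : ℝ) 1 :=
    Set.Icc_subset_Ioo hβ₀mem.1 hβ₁mem.2
  have hivt := intermediate_value_Ioo hlt.le (hcont.mono hsubI)
  obtain ⟨β, hβmem', hFβ⟩ := hivt ⟨hFβ₀, hFβ₁⟩
  have hβmem : β ∈ Set.Ioo (0 : ℝ) 1 :=
    ⟨lt_trans hβ₀mem.1 hβmem'.1, lt_trans hβmem'.2 hβ₁mem.2⟩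
  refine ⟨β, ⟨hβmem, hFβ.symm⟩, ?_⟩
  rintro β' ⟨hβ'mem, hβ'eq⟩
  exact hmono.injOn hβ'mem hβmem ((hβ'eq.symm).trans hFβ.symm)
end

section
/- For every integer t ≥ 2, the integral ∫₀¹ (ln(1-x)/((1-x)^(t-1)-1))^{t/(t-1)} (1-(1-x)^{t-1}) dx is finite (the integrand is integrable on (0,1)). -/
set_option maxHeartbeats 1000000

open MeasureTheory Real Set

lemma stmt5_pos (t : ℕ) (ht : 2 ≤ t) {x : ℝ} (hx : x ∈ Set.Ioo (0:ℝ) 1) :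
    0 ≤ (Real.log (1 - x) / ((1 - x) ^ (t - 1) - 1)) ^ ((t : ℝ) / ((t : ℝ) - 1)) *
          (1 - (1 - x) ^ (t - 1)) := by
  have hu0 : (0:ℝ) < 1 - x := by linarith [hx.2]
  have hu1 : (1:ℝ) - x < 1 := by linarith [hx.1]
  have hun : (1 - x) ^ (t - 1) < 1 := pow_lt_one₀ hu0.le hu1 (by omega)
  have hlog : Real.log (1 - x) < 0 := Real.log_neg hu0 hu1
  have hb : 0 ≤ Real.log (1 - x) / ((1 - x) ^ (t - 1) - 1) :=
    div_nonneg_of_nonpos hlog.le (by linarith)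
  have := Real.rpow_nonneg hb ((t : ℝ) / ((t : ℝ) - 1))
  nlinarith [this]

lemma stmt5_bound (t : ℕ) (ht : 2 ≤ t) {x : ℝ} (hx : x ∈ Set.Ioo (0:ℝ) 1) :
    (Real.log (1 - x) / ((1 - x) ^ (t - 1) - 1)) ^ ((t : ℝ) / ((t : ℝ) - 1)) *
          (1 - (1 - x) ^ (t - 1)) ≤ 4 + 64 * (1 - x) ^ (-(1/2) : ℝ) := by
  set u : ℝ := 1 - x with hu_def
  set p : ℝ := (t : ℝ) / ((t : ℝ) - 1) with hp_def
  have ht' : (2:ℝ) ≤ (t:ℝ) := by exact_mod_cast ht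
  have htm : (1:ℝ) ≤ (t:ℝ) - 1 := by linarith
  have hp1 : 1 ≤ p := (one_le_div (by linarith)).mpr (by linarith)
  have hp2 : p ≤ 2 := by rw [hp_def, div_le_iff₀ (by linarith)]; linarith
  have hp0 : 0 ≤ p := by linarith
  have hu0 : (0:ℝ) < u := by simp [hu_def]; linarith [hx.2]
  have hu1 : u < 1 := by simp [hu_def]; linarith [hx.1]
  have hx0 : 0 < x := hx.1
  have hun : u ^ (t - 1) < 1 := pow_lt_one₀ hu0.le hu1 (by omega)
  have hunu : u ^ (t - 1) ≤ u := by
    calc u ^ (t - 1) ≤ u ^ 1 := pow_le_pow_of_le_one hu0.le hu1.le (by omega)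
    _ = u := pow_one u
  set D : ℝ := 1 - u ^ (t - 1) with hD_def
  have hD0 : 0 < D := by simp [hD_def]; linarith
  have hD1 : D ≤ 1 := by
    have : 0 < u ^ (t-1) := pow_pos hu0 _
    simp [hD_def]; linarith
  have hDx : x ≤ D := by simp [hD_def, hu_def] at hunu ⊢; linarith
  set L : ℝ := -Real.log u with hL_def
  have hL0 : 0 < L := by simp [hL_def]; exact Real.log_neg hu0 hu1
  have hbase : Real.log u / (u ^ (t - 1) - 1) = L / D := by
    rw [hL_def, hD_def]
    rw [show (1:ℝ) - u ^ (t-1) = -(u ^ (t-1) - 1) by ring, div_neg, neg_div, neg_neg]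
  have hb0 : 0 < L / D := div_pos hL0 hD0
  -- bound on L : L ≤ (1-u)/u
  have hLle : L ≤ (1 - u) / u := by
    have h := Real.log_le_sub_one_of_pos (inv_pos.mpr hu0)
    rw [Real.log_inv] at h
    have : u⁻¹ - 1 = (1 - u)/u := by field_simp
    rw [hL_def]; linarith [this ▸ h]
  have hrpow_pos : 0 < u ^ (-(1/2) : ℝ) := Real.rpow_pos_of_pos hu0 _
  rw [hbase]
  clear_value u p D L
  rcases le_or_gt x (1/2) with hhalf | hhalf
  · -- x ≤ 1/2 : bound by 4
    have huh : (1/2 : ℝ) ≤ u := by simp [hu_def]; linarith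
    have hL2x : L ≤ 2 * x := by
      have h1 : (1 - u)/u ≤ (1-u)/(1/2) :=
        div_le_div_of_nonneg_left (by linarith) (by norm_num) huh
      have : (1-u)/(1/2) = 2 * x := by rw [hu_def]; ring
      linarith [hLle, this ▸ h1]
    have hb2 : L / D ≤ 2 := by
      have : L / D ≤ (2*x) / x := div_le_div₀ (by linarith) hL2x hx0 hDx
      rwa [mul_div_assoc, div_self hx0.ne', mul_one] at this
    have h4 : (L/D) ^ p ≤ 4 := by
      calc (L/D) ^ p ≤ (2:ℝ) ^ p := Real.rpow_le_rpow hb0.le hb2 hp0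
      _ ≤ (2:ℝ) ^ (2:ℝ) := Real.rpow_le_rpow_of_exponent_le one_le_two hp2
      _ = 4 := by rw [show (2:ℝ) = ((2:ℕ):ℝ) by norm_num, Real.rpow_natCast]; norm_num
    have hrp : 0 ≤ (L/D) ^ p := Real.rpow_nonneg hb0.le p
    nlinarith [hrp, h4, hD1, hD0, hrpow_pos]
  · -- x > 1/2 : bound by 64 * u ^ (-1/2)
    have huh : u ≤ 1/2 := by simp [hu_def]; linarith
    have hDh : (1/2 : ℝ) ≤ D := by linarith
    have hb2L : L / D ≤ 2 * L := by
      have h1 : L / D ≤ L / (1/2) := div_le_div_of_nonneg_left hL0.le (by norm_num) hDh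
      linarith [show L / (1/2 : ℝ) = 2 * L by ring]
    -- L ≤ 4 * u ^ (-(1/4))
    have hy0 : (0:ℝ) < u⁻¹ := inv_pos.mpr hu0
    have hL4 : L ≤ 4 * u ^ (-(4:ℝ)⁻¹) := by
      have h1 : Real.log (u⁻¹ ^ ((4:ℝ)⁻¹)) ≤ u⁻¹ ^ ((4:ℝ)⁻¹) - 1 :=
        Real.log_le_sub_one_of_pos (Real.rpow_pos_of_pos hy0 _)
      rw [Real.log_rpow hy0, Real.log_inv] at h1
      have h2 : u⁻¹ ^ ((4:ℝ)⁻¹) = u ^ (-(4:ℝ)⁻¹) := by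
        rw [Real.inv_rpow hu0.le, ← Real.rpow_neg hu0.le]
      rw [h2] at h1
      rw [hL_def]; nlinarith [h1]
    have hLb : L / D ≤ 8 * u ^ (-(4:ℝ)⁻¹) := by
      calc L / D ≤ 2 * L := hb2L
      _ ≤ 2 * (4 * u ^ (-(4:ℝ)⁻¹)) := by nlinarith [hL4]
      _ = 8 * u ^ (-(4:ℝ)⁻¹) := by ring
    have hu14 : 0 < u ^ (-(4:ℝ)⁻¹) := Real.rpow_pos_of_pos hu0 _
    have key : (L/D) ^ p ≤ 64 * u ^ (-(1/2):ℝ) := by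
      calc (L/D) ^ p ≤ (8 * u ^ (-(4:ℝ)⁻¹)) ^ p := Real.rpow_le_rpow hb0.le hLb hp0
      _ = 8 ^ p * (u ^ (-(4:ℝ)⁻¹)) ^ p := Real.mul_rpow (by norm_num) hu14.le
      _ = 8 ^ p * u ^ (-(4:ℝ)⁻¹ * p) := by rw [← Real.rpow_mul hu0.le]
      _ ≤ 64 * u ^ (-(1/2):ℝ) := by
          have h8 : (8:ℝ) ^ p ≤ (8:ℝ) ^ (2:ℝ) :=
            Real.rpow_le_rpow_of_exponent_le (by norm_num) hp2
          have h82 : (8:ℝ) ^ (2:ℝ) = 64 := by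
            rw [show (2:ℝ) = ((2:ℕ):ℝ) by norm_num, Real.rpow_natCast]; norm_num
          have hexp : u ^ (-(4:ℝ)⁻¹ * p) ≤ u ^ (-(1/2):ℝ) :=
            Real.rpow_le_rpow_of_exponent_ge hu0 hu1.le (by nlinarith)
          have hpos : 0 < u ^ (-(4:ℝ)⁻¹ * p) := Real.rpow_pos_of_pos hu0 _
          exact mul_le_mul (by linarith) hexp hpos.le (by norm_num)
    have hrp : 0 ≤ (L/D) ^ p := Real.rpow_nonneg hb0.le p
    have hfin : (L/D) ^ p * D ≤ (L/D) ^ p := mul_le_of_le_one_right hrp hD1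
    linarith [key, hfin, hrpow_pos]

theorem stmt_5 (t : ℕ) (ht : 2 ≤ t) :
    MeasureTheory.IntegrableOn
      (fun x : ℝ =>
        (Real.log (1 - x) / ((1 - x) ^ (t - 1) - 1)) ^ ((t : ℝ) / ((t : ℝ) - 1)) *
          (1 - (1 - x) ^ (t - 1)))
      (Set.Ioo (0 : ℝ) 1) := by
  have ht' : (2:ℝ) ≤ (t:ℝ) := by exact_mod_cast ht
  have hp0 : (0:ℝ) ≤ (t : ℝ) / ((t : ℝ) - 1) := div_nonneg (by linarith) (by linarith)
  -- integrability of the dominating function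
  have h1 : IntervalIntegrable (fun x : ℝ => x ^ (-(1/2) : ℝ)) volume 0 1 :=
    intervalIntegral.intervalIntegrable_rpow' (by norm_num)
  have h2 := (h1.comp_sub_left 1).symm
  norm_num at h2
  have h3 : IntegrableOn (fun x : ℝ => (1 - x) ^ (-(1/2) : ℝ)) (Set.Ioo (0:ℝ) 1) :=
    ((intervalIntegrable_iff_integrableOn_Ioc_of_le (by norm_num)).mp h2).mono_set
      Set.Ioo_subset_Ioc_self
  have hg : IntegrableOn (fun x : ℝ => 4 + 64 * (1 - x) ^ (-(1/2) : ℝ)) (Set.Ioo (0:ℝ) 1) := by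
    exact ((integrableOn_const_iff (C := (4:ℝ))).mpr (Or.inr (by simp [Real.volume_Ioo]))).add (h3.const_mul 64)
  -- measurability
  have hcont : ContinuousOn
      (fun x : ℝ =>
        (Real.log (1 - x) / ((1 - x) ^ (t - 1) - 1)) ^ ((t : ℝ) / ((t : ℝ) - 1)) *
          (1 - (1 - x) ^ (t - 1))) (Set.Ioo (0:ℝ) 1) := by
    have hc1 : ContinuousOn (fun x : ℝ => Real.log (1 - x)) (Set.Ioo (0:ℝ) 1) :=
      ContinuousOn.log ((continuous_const.sub continuous_id).continuousOn)
        (fun x hx => sub_ne_zero.mpr (by simp only [Set.mem_Ioo] at hx; linarith [hx.2]))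
    have hc2 : ContinuousOn (fun x : ℝ => (1 - x) ^ (t - 1) - 1) (Set.Ioo (0:ℝ) 1) :=
      (((continuous_const.sub continuous_id).pow _).sub continuous_const).continuousOn
    have hne : ∀ x ∈ Set.Ioo (0:ℝ) 1, (1 - x) ^ (t - 1) - 1 ≠ 0 := by
      intro x hx
      simp only [Set.mem_Ioo] at hx
      have : (1 - x) ^ (t - 1) < 1 := pow_lt_one₀ (by linarith) (by linarith) (by omega)
      intro h; linarith [sub_eq_zero.mp h]
    exact ((hc1.div hc2 hne).rpow_const (fun x _ => Or.inr hp0)).mul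
      (((continuous_const.sub ((continuous_const.sub continuous_id).pow _))).continuousOn)
  apply MeasureTheory.Integrable.mono' hg
    (hcont.aestronglyMeasurable measurableSet_Ioo)
  filter_upwards [ae_restrict_mem measurableSet_Ioo] with x hx
  rw [Real.norm_of_nonneg (stmt5_pos t ht hx)]
  exact stmt5_bound t ht hx
end

section
/- For every integer t ≥ 2, the integral ∫₀¹ (ln(1-x)/((1-x)^(t-1)-1))^{t/(t-1)} x^{t-1} dx is finite (the integrand is integrable on (0,1)). -/
open MeasureTheory Set Real

theorem stmt_6 (t : ℕ) (ht : 2 ≤ t) :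
    MeasureTheory.IntegrableOn
      (fun x : ℝ =>
        (Real.log (1 - x) / ((1 - x) ^ (t - 1) - 1)) ^ ((t : ℝ) / ((t : ℝ) - 1)) *
          x ^ (t - 1))
      (Set.Ioo (0 : ℝ) 1) := by
  have htR : (2:ℝ) ≤ (t:ℝ) := by exact_mod_cast ht
  set p : ℝ := (t : ℝ) / ((t : ℝ) - 1) with hp
  have htm1 : (1:ℝ) ≤ (t:ℝ) - 1 := by linarith
  have hp1 : 1 ≤ p := by rw [hp, le_div_iff₀ (by linarith)]; linarith
  have hp2 : p ≤ 2 := by rw [hp, div_le_iff₀ (by linarith)]; linarith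
  have hk : 1 ≤ t - 1 := by omega
  have hg : IntegrableOn (fun x : ℝ => 25 * (1 - x) ^ (-(1/2) : ℝ)) (Ioo (0:ℝ) 1) := by
    have h1 : IntervalIntegrable (fun x : ℝ => x ^ (-(1/2) : ℝ)) volume 0 1 :=
      intervalIntegral.intervalIntegrable_rpow' (by norm_num)
    have h2 := (h1.comp_sub_left 1).symm
    simp only [sub_zero, sub_self] at h2
    have h3 : IntegrableOn (fun x : ℝ => (1 - x) ^ (-(1/2) : ℝ)) (Ioo (0:ℝ) 1) :=
      (intervalIntegrable_iff_integrableOn_Ioo_of_le (by norm_num)).mp h2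
    exact h3.const_mul 25
  apply Integrable.mono' hg
  · apply Measurable.aestronglyMeasurable
    have hmb : Measurable fun x : ℝ => Real.log (1 - x) / ((1 - x) ^ (t - 1) - 1) :=
      (Real.measurable_log.comp (measurable_const.sub measurable_id)).div
        (((measurable_const.sub measurable_id).pow_const _).sub measurable_const)
    exact ((Real.continuous_rpow_const (by linarith : (0:ℝ) ≤ p)).measurable.comp hmb).mul
      (measurable_id.pow_const _)
  · rw [ae_restrict_iff' measurableSet_Ioo]
    filter_upwards with x hx
    obtain ⟨hx0, hx1⟩ := hx
    set u : ℝ := 1 - x with hu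
    have hu0 : 0 < u := by simp only [hu]; linarith
    have hu1 : u < 1 := by simp only [hu]; linarith
    have hlog : Real.log u < 0 := Real.log_neg hu0 hu1
    have hpow : u ^ (t-1) < 1 := pow_lt_one₀ hu0.le hu1 (by omega)
    have hden : u ^ (t-1) - 1 < 0 := by linarith
    have hb : 0 < Real.log u / (u ^ (t-1) - 1) := div_pos_of_neg_of_neg hlog hden
    have hkey : u ^ (t-1) * (1 - Real.log u) ≤ 1 := by
      have h1 : u ^ (t-1) ≤ u := by
        calc u ^ (t-1) ≤ u ^ 1 := pow_le_pow_of_le_one hu0.le hu1.le hk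
        _ = u := pow_one u
      have h2 : (0:ℝ) < 1 - Real.log u := by linarith
      have h3 : u ^ (t-1) * (1 - Real.log u) ≤ u * (1 - Real.log u) :=
        mul_le_mul_of_nonneg_right h1 h2.le
      have h4 : Real.log u⁻¹ ≤ u⁻¹ - 1 := Real.log_le_sub_one_of_pos (by positivity)
      rw [Real.log_inv] at h4
      have h5 : -(u * Real.log u) ≤ 1 - u := by
        have := mul_le_mul_of_nonneg_left h4 hu0.le
        rw [mul_sub, mul_inv_cancel₀ hu0.ne'] at this
        linarith
      nlinarith
    have hb1 : Real.log u / (u ^ (t-1) - 1) ≤ 1 - Real.log u := by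
      rw [div_le_iff_of_neg hden]
      nlinarith
    have hq : (1:ℝ) ≤ u ^ (-(1/4) : ℝ) :=
      Real.one_le_rpow_of_pos_of_le_one_of_nonpos hu0 hu1.le (by norm_num)
    have h6 : 1 - Real.log u ≤ 5 * u ^ (-(1/4) : ℝ) := by
      have hld := Real.log_le_rpow_div (le_of_lt (by positivity : (0:ℝ) < u⁻¹))
        (by norm_num : (0:ℝ) < 1/4)
      rw [Real.log_inv, Real.inv_rpow hu0.le, ← Real.rpow_neg hu0.le] at hld
      have : -Real.log u ≤ 4 * u ^ (-(1/4) : ℝ) := by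
        rw [div_div_eq_mul_div, div_eq_mul_inv] at hld
        calc -Real.log u ≤ u ^ (-(1/4):ℝ) / (1/4) := by
              rw [div_eq_mul_inv]; simpa [mul_comm] using hld
        _ = 4 * u ^ (-(1/4):ℝ) := by ring
      linarith
    -- final chain
    have hxp : (0:ℝ) ≤ x ^ (t-1) := by positivity
    have hxp1 : x ^ (t-1) ≤ 1 := pow_le_one₀ hx0.le hx1.le
    have hnn : (0:ℝ) ≤ (Real.log u / (u ^ (t-1) - 1)) ^ p := Real.rpow_nonneg hb.le p
    rw [Real.norm_eq_abs, abs_of_nonneg (mul_nonneg hnn hxp)]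
    have step1 : (Real.log u / (u ^ (t-1) - 1)) ^ p * x ^ (t-1)
        ≤ (Real.log u / (u ^ (t-1) - 1)) ^ p := by
      nlinarith
    have step2 : (Real.log u / (u ^ (t-1) - 1)) ^ p ≤ (5 * u ^ (-(1/4):ℝ)) ^ p :=
      Real.rpow_le_rpow hb.le (le_trans hb1 h6) (by linarith)
    have step3 : (5 * u ^ (-(1/4):ℝ)) ^ p ≤ 25 * u ^ (-(1/2):ℝ) := by
      rw [Real.mul_rpow (by norm_num) (Real.rpow_nonneg hu0.le _),
        ← Real.rpow_mul hu0.le]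
      have e1 : (5:ℝ) ^ p ≤ 25 := by
        have := Real.rpow_le_rpow_of_exponent_le (by norm_num : (1:ℝ) ≤ 5) hp2
        have e2 : (5:ℝ) ^ (2:ℝ) = 25 := by
          rw [show (2:ℝ) = ((2:ℕ):ℝ) by norm_num, Real.rpow_natCast]; norm_num
        linarith
      have e3 : u ^ (-(1/4) * p) ≤ u ^ (-(1/2):ℝ) :=
        Real.rpow_le_rpow_of_exponent_ge hu0 hu1.le (by linarith)
      have e4 : (0:ℝ) ≤ u ^ (-(1/4) * p) := Real.rpow_nonneg hu0.le _
      nlinarith [Real.rpow_nonneg hu0.le (-(1/2):ℝ), Real.rpow_pos_of_pos (show (0:ℝ)<5 by norm_num) p]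
    calc (Real.log u / (u ^ (t-1) - 1)) ^ p * x ^ (t-1)
        ≤ (Real.log u / (u ^ (t-1) - 1)) ^ p := step1
      _ ≤ (5 * u ^ (-(1/4):ℝ)) ^ p := step2
      _ ≤ 25 * u ^ (-(1/2):ℝ) := step3
end

section
/- Let G be a weighted connected multigraph obtained from a connected t-uniform hypergraph H by replacing every hyperedge e of weight w(e) with a spanning tree on the vertex set of e, each of whose t-1 edges has weight w(e). Then the minimum spanning tree weight of G is at most (t-1) times the total weight of any connected spanning subhypergraph of H. In particular MST(G) ≤ (t-1)·MST(H). -/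
/-- The simple graph obtained from a set of hyperedges by replacing each
hyperedge with a clique on its vertices. -/
def hyperGraph {V : Type*} (S : Finset (Finset V)) : SimpleGraph V where
  Adj u v := u ≠ v ∧ ∃ e ∈ S, u ∈ e ∧ v ∈ e
  symm := by
    constructor
    rintro u v ⟨h, e, he, hu, hv⟩
    exact ⟨h.symm, e, he, hv, hu⟩
  loopless := by
    constructor
    rintro v ⟨h, -⟩
    exact h rfl

/-- The simple graph determined by a set of (ordered) pairs. -/
def pairGraph {V : Type*} (P : Finset (V × V)) : SimpleGraph V where
  Adj u v := u ≠ v ∧ ((u, v) ∈ P ∨ (v, u) ∈ P)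
  symm := by
    constructor
    rintro u v ⟨h, hp⟩
    exact ⟨h.symm, hp.symm⟩
  loopless := by
    constructor
    rintro v ⟨h, -⟩
    exact h rfl

/-- The minimum weight of a connected spanning subhypergraph. -/
noncomputable def mstHyper {V : Type*} (E : Finset (Finset V)) (w : Finset V → ℝ) : ℝ :=
  sInf {x : ℝ | ∃ S ⊆ E, (hyperGraph S).Connected ∧ x = ∑ e ∈ S, w e}

/-- The minimum spanning tree weight of the multigraph whose edges are the
pairs `p ∈ Tr e` for hyperedges `e ∈ E`, each of weight `w e`. -/
noncomputable def mstTreeReplace {V : Type*} [DecidableEq V] (E : Finset (Finset V))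
    (w : Finset V → ℝ) (Tr : Finset V → Finset (V × V)) : ℝ :=
  sInf {x : ℝ | ∃ F : Finset ((V × V) × Finset V),
    (∀ q ∈ F, q.2 ∈ E ∧ q.1 ∈ Tr q.2) ∧
    (pairGraph (F.image Prod.fst)).Connected ∧
    x = ∑ q ∈ F, w q.2}

theorem stmt_10 {V : Type*} [Fintype V] [DecidableEq V] (t : ℕ) (ht : 2 ≤ t)
    (E : Finset (Finset V)) (hcard : ∀ e ∈ E, e.card = t)
    (w : Finset V → ℝ) (hw : ∀ e ∈ E, 0 < w e)
    (hconn : (hyperGraph E).Connected)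
    (Tr : Finset V → Finset (V × V))
    (hTr : ∀ e ∈ E,
      (∀ p ∈ Tr e, p.1 ∈ e ∧ p.2 ∈ e ∧ p.1 ≠ p.2) ∧
      (Tr e).card = t - 1 ∧
      ∀ u ∈ e, ∀ v ∈ e, (pairGraph (Tr e)).Reachable u v) :
    (∀ S ⊆ E, (hyperGraph S).Connected →
      mstTreeReplace E w Tr ≤ ((t : ℝ) - 1) * ∑ e ∈ S, w e) ∧
    mstTreeReplace E w Tr ≤ ((t : ℝ) - 1) * mstHyper E w := by
  have ht2 : (2 : ℝ) ≤ (t : ℝ) := by exact_mod_cast ht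
  have hcpos : (0 : ℝ) < (t : ℝ) - 1 := by linarith
  have hcast : ((t - 1 : ℕ) : ℝ) = (t : ℝ) - 1 := by
    have : 1 ≤ t := le_trans one_le_two ht
    push_cast [Nat.cast_sub this]; ring
  -- the set defining mstTreeReplace is bounded below by 0
  have hbdd : BddBelow {x : ℝ | ∃ F : Finset ((V × V) × Finset V),
      (∀ q ∈ F, q.2 ∈ E ∧ q.1 ∈ Tr q.2) ∧
      (pairGraph (F.image Prod.fst)).Connected ∧
      x = ∑ q ∈ F, w q.2} := by
    refine ⟨0, ?_⟩
    rintro x ⟨F, hF, -, rfl⟩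
    exact Finset.sum_nonneg fun q hq => (hw _ (hF q hq).1).le
  have main : ∀ S ⊆ E, (hyperGraph S).Connected →
      mstTreeReplace E w Tr ≤ ((t : ℝ) - 1) * ∑ e ∈ S, w e := by
    intro S hSE hS
    set F : Finset ((V × V) × Finset V) :=
      S.biUnion (fun e => (Tr e).image (fun p => (p, e))) with hFdef
    have hmemF : ∀ q ∈ F, q.2 ∈ S ∧ q.1 ∈ Tr q.2 := by
      intro q hq
      simp only [hFdef, Finset.mem_biUnion, Finset.mem_image] at hq
      obtain ⟨e, he, p, hp, rfl⟩ := hq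
      exact ⟨he, hp⟩
    have hsub : ∀ e ∈ S, ∀ p ∈ Tr e, p ∈ F.image Prod.fst := by
      intro e he p hp
      refine Finset.mem_image.2 ⟨(p, e), ?_, rfl⟩
      simp only [hFdef, Finset.mem_biUnion, Finset.mem_image]
      exact ⟨e, he, p, hp, rfl⟩
    have hconnG : (pairGraph (F.image Prod.fst)).Connected := by
      have hne : Nonempty V := hS.nonempty
      rw [SimpleGraph.connected_iff]
      refine ⟨?_, hne⟩
      intro u v
      obtain ⟨p⟩ := hS.preconnected u v
      induction p with
      | nil => exact SimpleGraph.Reachable.refl _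
      | cons h p ih =>
        refine SimpleGraph.Reachable.trans ?_ ih
        obtain ⟨hne', e, heS, hu, hv⟩ := h
        have hTe := hTr e (hSE heS)
        have hr := hTe.2.2 _ hu _ hv
        refine SimpleGraph.Reachable.mono ?_ hr
        intro a b hab
        obtain ⟨hab1, hab2⟩ := hab
        exact ⟨hab1, hab2.imp (hsub e heS _) (hsub e heS _)⟩
    have hdisj : (↑S : Set (Finset V)).PairwiseDisjoint
        (fun e => (Tr e).image (fun p => (p, e))) := by
      intro e _ f _ hef
      simp only [Finset.disjoint_left]
      rintro ⟨p, e'⟩ hp hq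
      simp only [Finset.mem_image] at hp hq
      obtain ⟨p1, -, h1⟩ := hp
      obtain ⟨p2, -, h2⟩ := hq
      exact hef ((congrArg Prod.snd h1).trans (congrArg Prod.snd h2).symm)
    have hsum : ∑ q ∈ F, w q.2 = ((t : ℝ) - 1) * ∑ e ∈ S, w e := by
      rw [hFdef, Finset.sum_biUnion hdisj, Finset.mul_sum]
      refine Finset.sum_congr rfl fun e he => ?_
      rw [Finset.sum_image (fun a _ b _ h => congrArg Prod.fst h)]
      simp only [Finset.sum_const, nsmul_eq_mul, (hTr e (hSE he)).2.1, hcast]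
    have hx : (∑ q ∈ F, w q.2) ∈ {x : ℝ | ∃ F : Finset ((V × V) × Finset V),
        (∀ q ∈ F, q.2 ∈ E ∧ q.1 ∈ Tr q.2) ∧
        (pairGraph (F.image Prod.fst)).Connected ∧
        x = ∑ q ∈ F, w q.2} :=
      ⟨F, fun q hq => ⟨hSE (hmemF q hq).1, (hmemF q hq).2⟩, hconnG, rfl⟩
    calc mstTreeReplace E w Tr ≤ ∑ q ∈ F, w q.2 := csInf_le hbdd hx
      _ = ((t : ℝ) - 1) * ∑ e ∈ S, w e := hsum
  refine ⟨main, ?_⟩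
  have hne : {x : ℝ | ∃ S ⊆ E, (hyperGraph S).Connected ∧ x = ∑ e ∈ S, w e}.Nonempty :=
    ⟨∑ e ∈ E, w e, E, Finset.Subset.refl E, hconn, rfl⟩
  have h2 : mstTreeReplace E w Tr / ((t : ℝ) - 1) ≤ mstHyper E w := by
    refine le_csInf hne ?_
    rintro x ⟨S, hSE, hS, rfl⟩
    rw [div_le_iff₀ hcpos]
    have := main S hSE hS
    linarith
  rw [div_le_iff₀ hcpos] at h2
  linarith
end

section
/- Let H be a finite connected t-uniform weighted hypergraph and let G'' be the multigraph obtained by replacing each hyperedge e of weight w(e) by a clique on its t vertices with all edge weights w(e). Then MST(G'') ≤ (t-1)·MST(H). -/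
/-- The minimum spanning tree weight of the multigraph `G''` obtained by
replacing each hyperedge `e ∈ E` with a clique on its vertices, with all
clique-edge weights equal to `w e`. An edge of `G''` is a pair of distinct
vertices of a hyperedge, labelled by that hyperedge. -/
noncomputable def mstClique {V : Type*} [DecidableEq V] (E : Finset (Finset V))
    (w : Finset V → ℝ) : ℝ :=
  sInf {x : ℝ | ∃ F : Finset ((V × V) × Finset V),
    (∀ q ∈ F, q.2 ∈ E ∧ q.1.1 ∈ q.2 ∧ q.1.2 ∈ q.2 ∧ q.1.1 ≠ q.1.2) ∧
    (pairGraph (F.image Prod.fst)).Connected ∧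
    x = ∑ q ∈ F, w q.2}

lemma star_key {V : Type*} [Fintype V] [DecidableEq V] (t : ℕ) (ht : 2 ≤ t)
    (E : Finset (Finset V)) (hcard : ∀ e ∈ E, e.card = t)
    (w : Finset V → ℝ) (S : Finset (Finset V)) (hSE : S ⊆ E)
    (hS : (hyperGraph S).Connected) :
    ∃ F : Finset ((V × V) × Finset V),
      (∀ q ∈ F, q.2 ∈ E ∧ q.1.1 ∈ q.2 ∧ q.1.2 ∈ q.2 ∧ q.1.1 ≠ q.1.2) ∧
      (pairGraph (F.image Prod.fst)).Connected ∧
      (∑ q ∈ F, w q.2) = ((t : ℝ) - 1) * ∑ e ∈ S, w e := by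
  classical
  haveI : Nonempty V := hS.nonempty
  set r : Finset V → V := fun e => if h : e.Nonempty then h.choose else Classical.arbitrary V
    with hr_def
  have hne : ∀ e ∈ S, e.Nonempty := by
    intro e he
    rw [← Finset.card_pos, hcard e (hSE he)]
    omega
  have hr : ∀ e ∈ S, r e ∈ e := by
    intro e he
    have h := hne e he
    simp only [hr_def, dif_pos h]
    exact h.choose_spec
  set F : Finset ((V × V) × Finset V) :=
    S.biUnion (fun e => (e.erase (r e)).image (fun u => ((r e, u), e))) with hF_def
  have hmem : ∀ q ∈ F, q.2 ∈ S ∧ q.1.1 = r q.2 ∧ q.1.2 ∈ q.2 ∧ q.1.1 ≠ q.1.2 := by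
    intro q hq
    simp only [hF_def, Finset.mem_biUnion, Finset.mem_image] at hq
    obtain ⟨e, he, u, hu, rfl⟩ := hq
    exact ⟨he, rfl, Finset.mem_of_mem_erase hu, fun h => (Finset.ne_of_mem_erase hu) h.symm⟩
  refine ⟨F, ?_, ?_, ?_⟩
  · intro q hq
    obtain ⟨h1, h2, h3, h4⟩ := hmem q hq
    exact ⟨hSE h1, h2 ▸ hr q.2 h1, h3, h4⟩
  · -- connectivity
    set P := F.image Prod.fst with hP_def
    have hPmem : ∀ e ∈ S, ∀ u ∈ e.erase (r e), (r e, u) ∈ P := by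
      intro e he u hu
      simp only [hP_def, Finset.mem_image]
      refine ⟨((r e, u), e), ?_, rfl⟩
      simp only [hF_def, Finset.mem_biUnion, Finset.mem_image]
      exact ⟨e, he, u, hu, rfl⟩
    have reach_r : ∀ e ∈ S, ∀ u ∈ e, (pairGraph P).Reachable (r e) u := by
      intro e he u hu
      by_cases h : u = r e
      · subst h; exact SimpleGraph.Reachable.refl _
      · have : (pairGraph P).Adj (r e) u :=
          ⟨fun hh => h hh.symm, Or.inl (hPmem e he u (Finset.mem_erase.mpr ⟨h, hu⟩))⟩
        exact this.reachable
    have adj_reach : ∀ {u v : V}, (hyperGraph S).Adj u v → (pairGraph P).Reachable u v := by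
      rintro u v ⟨-, e, he, hu, hv⟩
      exact (reach_r e he u hu).symm.trans (reach_r e he v hv)
    have walk_reach : ∀ {u v : V}, (hyperGraph S).Walk u v → (pairGraph P).Reachable u v := by
      intro u v p
      induction p with
      | nil => exact SimpleGraph.Reachable.refl _
      | cons h _ ih => exact (adj_reach h).trans ih
    exact ⟨fun u v => (hS.preconnected u v).elim fun p => walk_reach p⟩
  · rw [hF_def, Finset.sum_biUnion]
    · have : ∀ e ∈ S, (∑ q ∈ (e.erase (r e)).image (fun u => ((r e, u), e)), w q.2)
          = ((t : ℝ) - 1) * w e := by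
        intro e he
        rw [Finset.sum_image]
        · simp only
          rw [Finset.sum_const, Finset.card_erase_of_mem (hr e he), hcard e (hSE he)]
          rw [nsmul_eq_mul, Nat.cast_sub (by omega : 1 ≤ t), Nat.cast_one]
        · intro u _ v _ h
          exact (Prod.ext_iff.mp (Prod.ext_iff.mp h).1).2
      rw [Finset.sum_congr rfl this, ← Finset.mul_sum]
    · intro e he f hf hef
      simp only [Function.onFun]
      rw [Finset.disjoint_left]
      intro q hq hq'
      simp only [Finset.mem_image] at hq hq'
      obtain ⟨u, -, rfl⟩ := hq
      obtain ⟨v, -, h⟩ := hq'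
      exact hef (by simpa using (Prod.ext_iff.mp h).2.symm)

theorem stmt_11 {V : Type*} [Fintype V] [DecidableEq V] (t : ℕ) (ht : 2 ≤ t)
    (E : Finset (Finset V)) (hcard : ∀ e ∈ E, e.card = t)
    (w : Finset V → ℝ) (hw : ∀ e ∈ E, 0 < w e)
    (hconn : (hyperGraph E).Connected) :
    mstClique E w ≤ ((t : ℝ) - 1) * mstHyper E w := by
  classical
  have htpos : (0 : ℝ) < (t : ℝ) - 1 := by
    have : (2 : ℝ) ≤ t := by exact_mod_cast ht
    linarith
  -- bounded below by 0
  have hbdd : BddBelow {x : ℝ | ∃ F : Finset ((V × V) × Finset V),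
      (∀ q ∈ F, q.2 ∈ E ∧ q.1.1 ∈ q.2 ∧ q.1.2 ∈ q.2 ∧ q.1.1 ≠ q.1.2) ∧
      (pairGraph (F.image Prod.fst)).Connected ∧
      x = ∑ q ∈ F, w q.2} := by
    refine ⟨0, ?_⟩
    rintro x ⟨F, hF, -, rfl⟩
    exact Finset.sum_nonneg fun q hq => (hw q.2 (hF q hq).1).le
  have hBne : {x : ℝ | ∃ S ⊆ E, (hyperGraph S).Connected ∧ x = ∑ e ∈ S, w e}.Nonempty :=
    ⟨∑ e ∈ E, w e, E, subset_refl E, hconn, rfl⟩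
  have hkey : ∀ b ∈ {x : ℝ | ∃ S ⊆ E, (hyperGraph S).Connected ∧ x = ∑ e ∈ S, w e},
      mstClique E w ≤ ((t : ℝ) - 1) * b := by
    rintro b ⟨S, hSE, hS, rfl⟩
    obtain ⟨F, h1, h2, h3⟩ := star_key t ht E hcard w S hSE hS
    have := csInf_le hbdd (Set.mem_setOf.mpr ⟨F, h1, h2, rfl⟩)
    rw [h3] at this
    exact this
  have hlb : mstClique E w / ((t : ℝ) - 1) ≤ mstHyper E w := by
    apply le_csInf hBne
    intro b hb
    rw [div_le_iff₀ htpos]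
    exact (hkey b hb).trans_eq (mul_comm _ _)
  calc mstClique E w = mstClique E w / ((t : ℝ) - 1) * ((t : ℝ) - 1) := by
        field_simp
    _ ≤ mstHyper E w * ((t : ℝ) - 1) := by
        exact mul_le_mul_of_nonneg_right hlb htpos.le
    _ = ((t : ℝ) - 1) * mstHyper E w := mul_comm _ _
end
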